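/- arXiv:2401.11310 — 2 statements merged into one kernel-verified Lean document; each statement's English description precedes it below -/
import Mathlib

section
/- Let X be a compact metric space, (x_i) a sequence of points of X, (p_i) a fast growing sequence, and z = z((p_i),(x_i)) the Oxtoby sequence. Then L((x_i)) is a singleton if and only if for all y, y' ∈ O̅(z), if y and y' have the same p_i-skeleton for every i, then y = y' (equivalently, the canonical factor map from (O̅(z),S) onto its maximal equicontinuous factor, the odometer lim← ℤ_{p_i}, is an isomorphism). -/
open Filter Topology

section Defs

variable {X : Type*}

/-- The shift by `m`: `(shiftZ m z) n = z (n + m)`, so `shiftZ 1` is the left shift `S`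
and `shiftZ m = S^m`. -/
def shiftZ (m : ℤ) (z : ℤ → X) : ℤ → X := fun n => z (n + m)

/-- `Per_p(z)`: the set of positions `n` such that `z m = z n` for all `m ≡ n (mod p)`. -/
def PerSet (p : ℕ) (z : ℤ → X) : Set ℤ :=
  {n : ℤ | ∀ m : ℤ, (p : ℤ) ∣ m - n → z m = z n}

/-- `Per(z) = ⋃_{p ≥ 1} Per_p(z)`. -/
def PerFull (z : ℤ → X) : Set ℤ := {n : ℤ | ∃ p : ℕ, 1 ≤ p ∧ n ∈ PerSet p z}

/-- A Toeplitz sequence: every position is periodic. -/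
def IsToeplitz (z : ℤ → X) : Prop := ∀ n : ℤ, n ∈ PerFull z

/-- A non-periodic sequence: `S^m z ≠ z` for all `m ≠ 0`. -/
def NonPeriodicSeq (z : ℤ → X) : Prop := ∀ m : ℤ, m ≠ 0 → shiftZ m z ≠ z

/-- `u` and `v` have the same `p`-skeleton. -/
def SamePSkeleton (p : ℕ) (u v : ℤ → X) : Prop :=
  PerSet p u = PerSet p v ∧ ∀ n ∈ PerSet p u, u n = v n

/-- A period structure of a (non-periodic) Toeplitz sequence `z`. -/
def IsPeriodStructure (p : ℕ → ℕ) (z : ℤ → X) : Prop :=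
  (∀ i, 1 ≤ p i) ∧
  (∀ i q, 1 ≤ q → q < p i → PerSet q z ≠ PerSet (p i) z) ∧
  (∀ i, p i ∣ p (i + 1)) ∧
  (∀ n : ℤ, ∃ i, n ∈ PerSet (p i) z)

/-- A fast growing sequence of positive integers. -/
def FastGrowing (p : ℕ → ℕ) : Prop :=
  p 0 = 1 ∧ (∀ i, p i ∣ p (i + 1)) ∧ 3 ≤ p 1 ∧ ∀ i, 3 * p i ≤ p (i + 1)

/-- `oxDefined p i` is the set of positions of the Oxtoby sequence that are filled in
after step `i` of the inductive construction (step `i+1` fills, for each `k ≡ 0` or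
`-1 (mod p_{i+1}/p_i)`, the still-empty positions `J(i,k)` of the block
`[k p_i, (k+1) p_i)`). -/
def oxDefined (p : ℕ → ℕ) : ℕ → Set ℤ
  | 0 => ∅
  | i + 1 =>
      oxDefined p i ∪
        {n : ℤ | ∃ k : ℤ,
          (((p (i + 1) / p i : ℕ) : ℤ) ∣ k ∨ ((p (i + 1) / p i : ℕ) : ℤ) ∣ (k + 1)) ∧
          k * (p i : ℤ) ≤ n ∧ n < (k + 1) * (p i : ℤ) ∧ n ∉ oxDefined p i}

/-- `J(i,k)`: the set of positions in `[k p_i, (k+1) p_i)` still undefined after step `i`. -/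
def oxJ (p : ℕ → ℕ) (i : ℕ) (k : ℤ) : Set ℤ :=
  {n : ℤ | k * (p i : ℤ) ≤ n ∧ n < (k + 1) * (p i : ℤ) ∧ n ∉ oxDefined p i}

/-- The Oxtoby sequence `z((p_i),(x_i))`: position `n` receives the value `x_i` where `i`
is the first step after which `n` is defined. -/
noncomputable def oxtoby (p : ℕ → ℕ) (x : ℕ → X) : ℤ → X :=
  fun n => x (sInf {i : ℕ | n ∈ oxDefined p i})

/-- The reverse of a bi-infinite sequence: `x⁻¹(n) = x(-n)`. -/
def revSeq (z : ℤ → X) : ℤ → X := fun n => z (-n)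

/-- `[n0, n1]` is a maximal `p`-periodic block in `x`. -/
def IsMaxPeriodicBlock (p : ℕ) (x : ℤ → X) (n0 n1 : ℤ) : Prop :=
  n0 ≤ n1 ∧ Set.Icc n0 n1 ⊆ PerSet p x ∧
    ∀ n0' n1' : ℤ, n0' ≤ n0 → n1 ≤ n1' → Set.Icc n0' n1' ⊆ PerSet p x →
      n0' = n0 ∧ n1' = n1

variable [TopologicalSpace X]

/-- The orbit closure of `z` in `X^ℤ` with the product topology. -/
def orbitClosure (z : ℤ → X) : Set (ℤ → X) :=
  closure {y : ℤ → X | ∃ m : ℤ, y = shiftZ m z}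

/-- The ω-limit set of a sequence: all limits of convergent subsequences. -/
def omegaLimitSet (x : ℕ → X) : Set X :=
  {a : X | ∃ φ : ℕ → ℕ, StrictMono φ ∧ Tendsto (x ∘ φ) atTop (𝓝 a)}

/-- Two sequences have the same topological type if exactly the same subsequences
converge. -/
def SameTopType {Y : Type*} [TopologicalSpace Y] (x : ℕ → X) (y : ℕ → Y) : Prop :=
  ∀ φ : ℕ → ℕ, StrictMono φ →
    ((∃ a, Tendsto (x ∘ φ) atTop (𝓝 a)) ↔ (∃ a, Tendsto (y ∘ φ) atTop (𝓝 a)))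

/-- `f` is a conjugacy between the shift-invariant sets `A` and `B`: a homeomorphism
from `A` onto `B` commuting with the shift. -/
def IsConjugacy (A B : Set (ℤ → X)) (f : (ℤ → X) → (ℤ → X)) : Prop :=
  Set.MapsTo f A B ∧ ContinuousOn f A ∧
    (∃ g : (ℤ → X) → (ℤ → X), Set.MapsTo g B A ∧ ContinuousOn g B ∧
      (∀ a ∈ A, g (f a) = a) ∧ (∀ b ∈ B, f (g b) = b)) ∧
    ∀ a ∈ A, f (shiftZ 1 a) = shiftZ 1 (f a)

/-- The `m`-th iterate (for `m : ℤ`) of a self-homeomorphism. -/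
def iterZ {Y : Type*} [TopologicalSpace Y] (f : Y ≃ₜ Y) (m : ℤ) (a : Y) : Y :=
  ((f.toEquiv ^ m : Equiv.Perm Y)) a

end Defs

section Aux

variable {X : Type*}

lemma fg_pos {p : ℕ → ℕ} (hp : FastGrowing p) (i : ℕ) : 0 < p i := by
  induction i with
  | zero => simp [hp.1]
  | succ i ih => have := hp.2.2.2 i; omega

lemma fg_ge {p : ℕ → ℕ} (hp : FastGrowing p) (i : ℕ) : i + 1 ≤ p i := by
  induction i with
  | zero => simp [hp.1]
  | succ i ih => have := hp.2.2.2 i; have := fg_pos hp i; omega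

lemma fg_dvd {p : ℕ → ℕ} (hp : FastGrowing p) {i j : ℕ} (h : i ≤ j) : p i ∣ p j := by
  induction j, h using Nat.le_induction with
  | base => rfl
  | succ j hij ih => exact ih.trans (hp.2.1 j)

lemma fg_ratio_mul {p : ℕ → ℕ} (hp : FastGrowing p) (i : ℕ) :
    ((p (i+1) / p i : ℕ) : ℤ) * (p i : ℤ) = (p (i+1) : ℤ) := by
  have := Nat.div_mul_cancel (hp.2.1 i)
  exact_mod_cast congrArg (Nat.cast : ℕ → ℤ) this

lemma fg_ratio_ge {p : ℕ → ℕ} (hp : FastGrowing p) (i : ℕ) : 3 ≤ p (i+1) / p i :=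
  (Nat.le_div_iff_mul_le (fg_pos hp i)).2 (hp.2.2.2 i)

lemma oxDefined_translate {p : ℕ → ℕ} (hp : FastGrowing p) :
    ∀ (i : ℕ) (t n : ℤ), n ∈ oxDefined p i → n + t * (p i : ℤ) ∈ oxDefined p i := by
  intro i
  induction i with
  | zero => intro t n h; exact absurd h (by simp [oxDefined])
  | succ i ih =>
    intro t n h
    have hmul := fg_ratio_mul hp i
    rcases h with h | ⟨k, hk, h1, h2, h3⟩
    · left
      have := ih (t * ((p (i+1) / p i : ℕ) : ℤ)) n h
      rwa [mul_assoc, hmul] at this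
    · right
      refine ⟨k + t * ((p (i+1) / p i : ℕ) : ℤ), ?_, ?_, ?_, ?_⟩
      · rcases hk with hk | hk
        · exact Or.inl (hk.add (dvd_mul_left _ t))
        · refine Or.inr ?_
          have : k + t * ((p (i+1) / p i : ℕ) : ℤ) + 1
              = (k + 1) + t * ((p (i+1) / p i : ℕ) : ℤ) := by ring
          rw [this]
          exact hk.add (dvd_mul_left _ t)
      · have : (k + t * ((p (i+1) / p i : ℕ) : ℤ)) * (p i : ℤ)
            = k * (p i : ℤ) + t * (p (i+1) : ℤ) := by
          rw [add_mul, mul_assoc, hmul]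
        rw [this]; linarith
      · have : (k + t * ((p (i+1) / p i : ℕ) : ℤ) + 1) * (p i : ℤ)
            = (k + 1) * (p i : ℤ) + t * (p (i+1) : ℤ) := by
          rw [add_right_comm, add_mul, add_mul, mul_assoc, hmul]
        rw [this]; linarith
      · intro hmem
        have := ih (-(t * ((p (i+1) / p i : ℕ) : ℤ))) _ hmem
        rw [neg_mul, mul_assoc, hmul] at this
        rw [add_neg_cancel_right] at this
        exact h3 this

lemma oxDefined_mono {p : ℕ → ℕ} {i j : ℕ} (h : i ≤ j) :
    oxDefined p i ⊆ oxDefined p j := by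
  induction j, h using Nat.le_induction with
  | base => exact le_refl _
  | succ j hij ih => exact ih.trans (by intro n hn; exact Or.inl hn)

lemma oxDefined_translate_dvd {p : ℕ → ℕ} (hp : FastGrowing p) {i j : ℕ} (hij : i ≤ j)
    {n : ℤ} (t : ℤ) (h : n ∈ oxDefined p i) : n + t * (p j : ℤ) ∈ oxDefined p i := by
  obtain ⟨c, hc⟩ := fg_dvd hp hij
  have : (p j : ℤ) = (p i : ℤ) * (c : ℤ) := by exact_mod_cast congrArg (Nat.cast : ℕ → ℤ) hc
  have h2 : n + t * ((p i : ℤ) * (c : ℤ)) = n + (t * c) * (p i : ℤ) := by ring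
  rw [this, h2]
  exact oxDefined_translate hp i (t * c) n h

lemma oxtoby_translate {p : ℕ → ℕ} (hp : FastGrowing p) (x : ℕ → X) {i : ℕ} {n : ℤ}
    (h : n ∈ oxDefined p i) (t : ℤ) :
    oxtoby p x (n + t * (p i : ℤ)) = oxtoby p x n := by
  have key : ∀ j ≤ i, (n ∈ oxDefined p j ↔ n + t * (p i : ℤ) ∈ oxDefined p j) := by
    intro j hj
    constructor
    · intro hn; exact oxDefined_translate_dvd hp hj t hn
    · intro hn
      have := oxDefined_translate_dvd hp hj (-t) hn
      rwa [neg_mul, add_neg_cancel_right] at this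
  have h' : n + t * (p i : ℤ) ∈ oxDefined p i := (key i le_rfl).1 h
  unfold oxtoby
  congr 1
  have hne : {j : ℕ | n ∈ oxDefined p j}.Nonempty := ⟨i, h⟩
  have hne' : {j : ℕ | n + t * (p i : ℤ) ∈ oxDefined p j}.Nonempty := ⟨i, h'⟩
  have hs := Nat.sInf_mem hne
  have hs' := Nat.sInf_mem hne'
  have hle : sInf {j : ℕ | n ∈ oxDefined p j} ≤ i := Nat.sInf_le h
  have hle' : sInf {j : ℕ | n + t * (p i : ℤ) ∈ oxDefined p j} ≤ i := Nat.sInf_le h'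
  apply le_antisymm
  · exact Nat.sInf_le ((key _ hle).1 hs)
  · exact Nat.sInf_le ((key _ hle').2 hs')

lemma oxtoby_perset {p : ℕ → ℕ} (hp : FastGrowing p) (x : ℕ → X) {i : ℕ} {n m : ℤ}
    (h : n ∈ oxDefined p i) (hd : (p i : ℤ) ∣ m - n) : oxtoby p x m = oxtoby p x n := by
  obtain ⟨t, ht⟩ := hd
  have : m = n + t * (p i : ℤ) := by rw [mul_comm] at ht; omega
  rw [this]; exact oxtoby_translate hp x h t

lemma oxDefined_fill {p : ℕ → ℕ} (hp : FastGrowing p) {i : ℕ} {n : ℤ}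
    (h0 : -(p i : ℤ) ≤ n) (h1 : n < (p i : ℤ)) (h2 : n ∉ oxDefined p i) :
    n ∈ oxDefined p (i+1) := by
  rcases le_or_gt 0 n with hn | hn
  · exact Or.inr ⟨0, Or.inl (dvd_zero _), by simpa using hn, by simpa using h1, h2⟩
  · exact Or.inr ⟨-1, Or.inr (by simp), by linarith [show (-1 : ℤ) * (p i : ℤ) = -(p i : ℤ) by ring], by simpa using hn, h2⟩
end Aux

section Aux2

variable {X : Type*}

lemma oxtoby_stage {p : ℕ → ℕ} (x : ℕ → X) {i : ℕ} {n : ℤ}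
    (h2 : n ∉ oxDefined p i) (h3 : n ∈ oxDefined p (i+1)) :
    oxtoby p x n = x (i+1) := by
  unfold oxtoby
  congr 1
  have hs := Nat.sInf_mem (⟨i+1, h3⟩ : {j : ℕ | n ∈ oxDefined p j}.Nonempty)
  have hle : sInf {j : ℕ | n ∈ oxDefined p j} ≤ i + 1 := Nat.sInf_le h3
  have : ¬ (sInf {j : ℕ | n ∈ oxDefined p j} ≤ i) := by
    intro hle'
    exact h2 (oxDefined_mono hle' hs)
  omega

lemma oxDefined_exists {p : ℕ → ℕ} (hp : FastGrowing p) (n : ℤ) :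
    ∃ j, n ∈ oxDefined p j := by
  obtain ⟨j, hj⟩ : ∃ j : ℕ, n.natAbs < p j := ⟨n.natAbs, fg_ge hp n.natAbs⟩
  by_cases h : n ∈ oxDefined p j
  · exact ⟨j, h⟩
  · refine ⟨j + 1, oxDefined_fill hp ?_ ?_ h⟩ <;>
    · have h1 : (n.natAbs : ℤ) < (p j : ℤ) := by exact_mod_cast hj
      omega

/-- The canonical hole path: `hseq 0 = 0`, `hseq (i+1) = hseq i + p i`. -/
def hseq (p : ℕ → ℕ) : ℕ → ℤ
  | 0 => 0
  | i + 1 => hseq p i + (p i : ℤ)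

lemma hseq_congr {p : ℕ → ℕ} (hp : FastGrowing p) {i j : ℕ} (h : i ≤ j) :
    (p i : ℤ) ∣ hseq p j - hseq p i := by
  induction j, h using Nat.le_induction with
  | base => simp
  | succ j hij ih =>
    have : hseq p (j+1) - hseq p i = (hseq p j - hseq p i) + (p j : ℤ) := by
      simp [hseq]; ring
    rw [this]
    exact dvd_add ih (by exact_mod_cast Int.natCast_dvd_natCast.2 (fg_dvd hp hij))

lemma hseq_spec {p : ℕ → ℕ} (hp : FastGrowing p) :
    ∀ i : ℕ, 1 ≤ i → (i : ℤ) ≤ hseq p i ∧ hseq p i + (i : ℤ) ≤ (p i : ℤ) := by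
  intro i hi
  induction i with
  | zero => omega
  | succ i ih =>
    rcases Nat.eq_or_lt_of_le hi with h1 | h1
    · have : i = 0 := by omega
      subst this
      have h3 : (3 : ℤ) ≤ (p 1 : ℤ) := by exact_mod_cast hp.2.2.1
      simp [hseq, hp.1]
      omega
    · have hi1 : 1 ≤ i := by omega
      obtain ⟨ha, hb⟩ := ih hi1
      have hpi : (1 : ℤ) ≤ (p i : ℤ) := by exact_mod_cast fg_pos hp i
      have hgr : (3 : ℤ) * (p i : ℤ) ≤ (p (i+1) : ℤ) := by exact_mod_cast hp.2.2.2 i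
      constructor
      · show (↑(i+1) : ℤ) ≤ hseq p i + (p i : ℤ)
        push_cast; omega
      · show hseq p i + (p i : ℤ) + (↑(i+1) : ℤ) ≤ (p (i+1) : ℤ)
        push_cast; omega

lemma hseq_notMem {p : ℕ → ℕ} (hp : FastGrowing p) : ∀ i : ℕ, hseq p i ∉ oxDefined p i := by
  intro i
  induction i with
  | zero => simp [oxDefined]
  | succ i ih =>
    rcases Nat.eq_zero_or_pos i with rfl | hi
    · -- hseq 1 = 1, need 1 ∉ oxDefined p 1
      intro h
      have h1 : hseq p 1 = 1 := by simp [hseq, hp.1]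
      rw [h1] at h
      rcases h with h | ⟨k, hk, hb1, hb2, _⟩
      · simp [oxDefined] at h
      · have hp0 : (p 0 : ℤ) = 1 := by exact_mod_cast hp.1
        simp only [hp0, mul_one] at hb1 hb2
        have hk1 : k = 1 := by omega
        subst hk1
        have hq : (3 : ℕ) ≤ p 1 / p 0 := fg_ratio_ge hp 0
        rcases hk with hk | hk
        · have h5 : ((p (0+1) / p 0 : ℕ) : ℤ) ≤ 1 := Int.le_of_dvd one_pos hk
          have h6 : (3:ℤ) ≤ ((p (0+1) / p 0 : ℕ) : ℤ) := by exact_mod_cast hq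
          linarith
        · have h5 : ((p (0+1) / p 0 : ℕ) : ℤ) ≤ 2 := Int.le_of_dvd (by norm_num) hk
          have h6 : (3:ℤ) ≤ ((p (0+1) / p 0 : ℕ) : ℤ) := by exact_mod_cast hq
          linarith
    · intro h
      obtain ⟨ha, hb⟩ := hseq_spec hp i hi
      have hii : (1 : ℤ) ≤ (i : ℤ) := by exact_mod_cast hi
      rcases h with h | ⟨k, hk, hb1, hb2, _⟩
      · -- translate back by p i
        have := oxDefined_translate hp i (-1) _ h
        have he : hseq p (i+1) + (-1) * (p i : ℤ) = hseq p i := by simp [hseq]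
        rw [he] at this
        exact ih this
      · -- block must be k = 1
        have hpi : (0 : ℤ) < (p i : ℤ) := by exact_mod_cast fg_pos hp i
        have hrange : (1 : ℤ) * (p i : ℤ) ≤ hseq p (i+1) ∧ hseq p (i+1) < (1+1) * (p i : ℤ) := by
          constructor
          · show (1:ℤ) * (p i : ℤ) ≤ hseq p i + (p i : ℤ)
            omega
          · show hseq p i + (p i : ℤ) < (1+1) * (p i : ℤ)
            omega
        have hk1 : k = 1 := by nlinarith [hrange.1, hrange.2, hb1, hb2]
        subst hk1
        have hq : (3 : ℕ) ≤ p (i+1) / p i := fg_ratio_ge hp i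
        have hq' : (3:ℤ) ≤ ((p (i+1) / p i : ℕ) : ℤ) := by exact_mod_cast hq
        rcases hk with hk | hk
        · exact absurd (Int.le_of_dvd one_pos hk) (by omega)
        · exact absurd (Int.le_of_dvd (by norm_num) hk) (by omega)

/-- For every `n`, eventually `n + hseq j` lies in the base block `[0, p j)`. -/
lemma hseq_window {p : ℕ → ℕ} (hp : FastGrowing p) (n : ℤ) :
    ∃ I : ℕ, 1 ≤ I ∧ ∀ j, I ≤ j → 0 ≤ n + hseq p j ∧ n + hseq p j < (p j : ℤ) := by
  refine ⟨n.natAbs + 1, by omega, ?_⟩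
  intro j hj
  have hj1 : 1 ≤ j := by omega
  obtain ⟨ha, hb⟩ := hseq_spec hp j hj1
  have : (n.natAbs : ℤ) + 1 ≤ (j : ℤ) := by exact_mod_cast hj
  omega

end Aux2

section Aux3

variable {X : Type*}

/-- The aperiodic positions of the limit fiber along the hole path `hseq`. -/
def Aset (p : ℕ → ℕ) : Set ℤ := {n : ℤ | ∀ i, n + hseq p i ∉ oxDefined p i}

lemma zero_mem_Aset {p : ℕ → ℕ} (hp : FastGrowing p) : (0 : ℤ) ∈ Aset p := by
  intro i
  simpa using hseq_notMem hp i

open scoped Classical in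
/-- The candidate limit point with value `c` on the aperiodic set. -/
noncomputable def ycSeq (p : ℕ → ℕ) (x : ℕ → X) (c : X) : ℤ → X :=
  fun n => if n ∈ Aset p then c
    else oxtoby p x (n + hseq p (sInf {i : ℕ | n + hseq p i ∈ oxDefined p i}))

lemma ycSeq_zero {p : ℕ → ℕ} (hp : FastGrowing p) (x : ℕ → X) (c : X) :
    ycSeq p x c 0 = c := by
  rw [ycSeq, if_pos (zero_mem_Aset hp)]

lemma oxtoby_hseq_consistent {p : ℕ → ℕ} (hp : FastGrowing p) (x : ℕ → X) {n : ℤ} {i j : ℕ}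
    (hij : i ≤ j) (hi : n + hseq p i ∈ oxDefined p i) :
    oxtoby p x (n + hseq p j) = oxtoby p x (n + hseq p i) := by
  refine oxtoby_perset hp x hi ?_
  have := hseq_congr hp hij
  have he : n + hseq p j - (n + hseq p i) = hseq p j - hseq p i := by ring
  rw [he]
  exact this

lemma ycSeq_eval {p : ℕ → ℕ} (hp : FastGrowing p) (x : ℕ → X) (c : X) {n : ℤ} (j : ℕ)
    (hj : n + hseq p j ∈ oxDefined p j) :
    ycSeq p x c n = oxtoby p x (n + hseq p j) := by
  have hnA : n ∉ Aset p := fun h => h j hj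
  rw [ycSeq, if_neg hnA]
  have hne : {i : ℕ | n + hseq p i ∈ oxDefined p i}.Nonempty := ⟨j, hj⟩
  have hs : n + hseq p (sInf {i : ℕ | n + hseq p i ∈ oxDefined p i})
      ∈ oxDefined p (sInf {i : ℕ | n + hseq p i ∈ oxDefined p i}) := Nat.sInf_mem hne
  rcases le_total (sInf {i : ℕ | n + hseq p i ∈ oxDefined p i}) j with h | h
  · exact (oxtoby_hseq_consistent hp x h hs).symm
  · exact oxtoby_hseq_consistent hp x h hj

lemma ycSeq_hole {p : ℕ → ℕ} (hp : FastGrowing p) (x : ℕ → X) (c : X) {n₀ : ℤ}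
    (hA : n₀ ∈ Aset p) {j : ℕ} (h0 : 0 ≤ n₀ + hseq p j) (h1 : n₀ + hseq p j < (p j : ℤ)) :
    ycSeq p x c (n₀ - (p j : ℤ)) = x (j + 1) := by
  have hnd : n₀ + hseq p j ∉ oxDefined p j := hA j
  have hd : n₀ + hseq p j ∈ oxDefined p (j+1) := oxDefined_fill hp (by omega) h1 hnd
  have key : (n₀ - (p j : ℤ)) + hseq p (j+1) = n₀ + hseq p j := by
    show (n₀ - (p j : ℤ)) + (hseq p j + (p j : ℤ)) = n₀ + hseq p j
    ring
  have he := ycSeq_eval hp x c (n := n₀ - (p j : ℤ)) (j+1) (by rw [key]; exact hd)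
  rw [he, key, oxtoby_stage x hnd hd]

lemma ycSeq_mem {p : ℕ → ℕ} [MetricSpace X] (hp : FastGrowing p) (x : ℕ → X) {c : X}
    (hc : c ∈ omegaLimitSet x) :
    ycSeq p x c ∈ orbitClosure (oxtoby p x) := by
  obtain ⟨φ, hφ, hlim⟩ := hc
  set w : ℕ → (ℤ → X) := fun k => shiftZ (hseq p (φ (k+1) - 1)) (oxtoby p x) with hw
  have hφge : ∀ k, k + 1 ≤ φ (k+1) := fun k => hφ.le_apply
  have htend : Filter.Tendsto w Filter.atTop (nhds (ycSeq p x c)) := by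
    rw [tendsto_pi_nhds]
    intro n
    by_cases hnA : n ∈ Aset p
    · rw [show ycSeq p x c n = c from if_pos hnA]
      obtain ⟨I, hI1, hIw⟩ := hseq_window hp n
      have heq : ∀ k ≥ I, w k n = x (φ (k+1)) := by
        intro k hk
        have hj : I ≤ φ (k+1) - 1 := by have := hφge k; omega
        set j := φ (k+1) - 1 with hjdef
        obtain ⟨h0, h1⟩ := hIw j hj
        have hnd : n + hseq p j ∉ oxDefined p j := hnA j
        have hd : n + hseq p j ∈ oxDefined p (j+1) := oxDefined_fill hp (by omega) h1 hnd
        have : w k n = oxtoby p x (n + hseq p j) := rfl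
        rw [this, oxtoby_stage x hnd hd]
        congr 1
        have := hφge k
        omega
      have hlim' : Filter.Tendsto (fun k => x (φ (k+1))) Filter.atTop (nhds c) :=
        hlim.comp (Filter.tendsto_add_atTop_nat 1)
      exact Filter.Tendsto.congr' (Filter.eventually_atTop.2 ⟨I, fun k hk => (heq k hk).symm⟩) hlim'
    · have hex : ∃ j, n + hseq p j ∈ oxDefined p j := by
        by_contra hcon
        push_neg at hcon
        exact hnA hcon
      obtain ⟨j₀, hj₀⟩ := hex
      have heq : ∀ k ≥ j₀, w k n = ycSeq p x c n := by
        intro k hk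
        have hj : j₀ ≤ φ (k+1) - 1 := by have := hφge k; omega
        have : w k n = oxtoby p x (n + hseq p (φ (k+1) - 1)) := rfl
        rw [this, oxtoby_hseq_consistent hp x hj hj₀, ← ycSeq_eval hp x c j₀ hj₀]
      exact Filter.Tendsto.congr'
        (Filter.eventually_atTop.2 ⟨j₀, fun k hk => (heq k hk).symm⟩) tendsto_const_nhds
  exact mem_closure_of_tendsto htend
    (Filter.Eventually.of_forall fun k => ⟨hseq p (φ (k+1) - 1), rfl⟩)

end Aux3

section Aux4

variable {X : Type*} [MetricSpace X]

lemma omega_two_values {x : ℕ → X} {a b : X} (ha : a ∈ omegaLimitSet x)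
    (hb : b ∈ omegaLimitSet x) (hab : a ≠ b) (J : ℕ) :
    ∃ j₁, J ≤ j₁ ∧ ∃ j₂, J ≤ j₂ ∧ x (j₁ + 1) ≠ x (j₂ + 1) := by
  by_contra hcon
  push_neg at hcon
  have key : ∀ {cc : X}, cc ∈ omegaLimitSet x → cc = x (J + 1) := by
    rintro cc ⟨φ, hφ, hl⟩
    have hev : ∀ k ≥ J + 1, x (φ k) = x (J + 1) := by
      intro k hk
      have h1 : J + 1 ≤ φ k := le_trans hk hφ.le_apply
      have h2 := hcon (φ k - 1) (by omega) J le_rfl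
      rwa [show φ k - 1 + 1 = φ k by omega] at h2
    have hl2 : Filter.Tendsto (x ∘ φ) Filter.atTop (nhds (x (J + 1))) :=
      Filter.Tendsto.congr'
        (Filter.eventually_atTop.2 ⟨J + 1, fun k hk => (hev k hk).symm⟩) tendsto_const_nhds
    exact tendsto_nhds_unique hl hl2
  exact hab ((key ha).trans (key hb).symm)

lemma tendsto_of_omega_singleton [CompactSpace X] {x : ℕ → X} {a : X}
    (h : omegaLimitSet x = {a}) : Filter.Tendsto x Filter.atTop (nhds a) := by
  by_contra hcon
  rw [Metric.tendsto_atTop] at hcon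
  push_neg at hcon
  obtain ⟨ε, hε, hfr⟩ := hcon
  have hfreq : ∃ᶠ k in Filter.atTop, ε ≤ dist (x k) a :=
    Filter.frequently_atTop.2 fun N => (hfr N).imp (fun k ⟨h1, h2⟩ => ⟨h1, h2⟩)
  obtain ⟨φ, hφ, hP⟩ := Filter.extraction_of_frequently_atTop hfreq
  obtain ⟨cc, -, ψ, hψ, hl⟩ :=
    isCompact_univ.tendsto_subseq (fun k => Set.mem_univ ((fun j => x (φ j)) k))
  have hcc : cc ∈ omegaLimitSet x := ⟨φ ∘ ψ, hφ.comp hψ, hl⟩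
  rw [h, Set.mem_singleton_iff] at hcc
  subst hcc
  have hdist : Filter.Tendsto (fun k => dist (x (φ (ψ k))) cc) Filter.atTop
      (nhds (dist cc cc)) := hl.dist tendsto_const_nhds
  have hge : ε ≤ dist cc cc :=
    ge_of_tendsto hdist (Filter.Eventually.of_forall fun k => hP (ψ k))
  rw [dist_self] at hge
  linarith

lemma orbitClosure_approx {z y : ℤ → X} (hy : y ∈ orbitClosure z)
    (n m' : ℤ) {ε : ℝ} (hε : 0 < ε) :
    ∃ m : ℤ, dist (y n) (z (n + m)) < ε ∧ dist (y m') (z (m' + m)) < ε := by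
  have hU : IsOpen {w : ℤ → X | dist (w n) (y n) < ε ∧ dist (w m') (y m') < ε} :=
    IsOpen.inter
      (isOpen_lt (Continuous.dist (continuous_apply n) continuous_const) continuous_const)
      (isOpen_lt (Continuous.dist (continuous_apply m') continuous_const) continuous_const)
  have hyU : y ∈ {w : ℤ → X | dist (w n) (y n) < ε ∧ dist (w m') (y m') < ε} :=
    ⟨by simpa using hε, by simpa using hε⟩
  obtain ⟨w, hw1, hw2⟩ := mem_closure_iff.1 hy _ hU hyU
  obtain ⟨m, rfl⟩ := hw2
  exact ⟨m, by rw [dist_comm]; exact hw1.1, by rw [dist_comm]; exact hw1.2⟩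

end Aux4

section Aux5

variable {X : Type*} [MetricSpace X]

lemma ycSeq_eq_of_notMemA {p : ℕ → ℕ} (x : ℕ → X) (a b : X) {m : ℤ} (hm : m ∉ Aset p) :
    ycSeq p x a m = ycSeq p x b m := by
  rw [ycSeq, ycSeq]
  classical
  rw [if_neg hm, if_neg hm]

lemma ycSeq_not_perset {p : ℕ → ℕ} (hp : FastGrowing p) (x : ℕ → X) {a b : X}
    (ha : a ∈ omegaLimitSet x) (hb : b ∈ omegaLimitSet x) (hab : a ≠ b) (c : X)
    {i : ℕ} {n n₀ : ℤ} (hA : n₀ ∈ Aset p) (hdvd : (p i : ℤ) ∣ n₀ - n) :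
    n ∉ PerSet (p i) (ycSeq p x c) := by
  intro hmem
  obtain ⟨I, hI1, hIw⟩ := hseq_window hp n₀
  obtain ⟨j₁, hj₁, j₂, hj₂, hne⟩ := omega_two_values ha hb hab (max i I)
  have hval : ∀ j, max i I ≤ j → ycSeq p x c (n₀ - (p j : ℤ)) = x (j + 1) := by
    intro j hj
    obtain ⟨h0, h1⟩ := hIw j (le_trans (le_max_right i I) hj)
    exact ycSeq_hole hp x c hA h0 h1
  have hdj : ∀ j, max i I ≤ j → (p i : ℤ) ∣ (n₀ - (p j : ℤ)) - n := by
    intro j hj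
    have h1 : (p i : ℤ) ∣ (p j : ℤ) :=
      Int.natCast_dvd_natCast.2 (fg_dvd hp (le_trans (le_max_left i I) hj))
    have he : (n₀ - (p j : ℤ)) - n = (n₀ - n) + (-1) * (p j : ℤ) := by ring
    rw [he]
    exact dvd_add hdvd (Dvd.dvd.mul_left h1 (-1))
  have e1 : ycSeq p x c (n₀ - (p j₁ : ℤ)) = ycSeq p x c n := hmem _ (hdj j₁ hj₁)
  have e2 : ycSeq p x c (n₀ - (p j₂ : ℤ)) = ycSeq p x c n := hmem _ (hdj j₂ hj₂)
  rw [hval j₁ hj₁] at e1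
  rw [hval j₂ hj₂] at e2
  exact hne (e1.trans e2.symm)

lemma ycSeq_samePSkeleton {p : ℕ → ℕ} (hp : FastGrowing p) (x : ℕ → X) {a b : X}
    (ha : a ∈ omegaLimitSet x) (hb : b ∈ omegaLimitSet x) (hab : a ≠ b) (i : ℕ) :
    SamePSkeleton (p i) (ycSeq p x a) (ycSeq p x b) := by
  constructor
  · ext n
    by_cases hcl : ∃ n₀, n₀ ∈ Aset p ∧ (p i : ℤ) ∣ n₀ - n
    · obtain ⟨n₀, hA, hdvd⟩ := hcl
      exact iff_of_false (ycSeq_not_perset hp x ha hb hab a hA hdvd)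
        (ycSeq_not_perset hp x ha hb hab b hA hdvd)
    · push_neg at hcl
      have hval : ∀ m : ℤ, (p i : ℤ) ∣ m - n → ycSeq p x a m = ycSeq p x b m :=
        fun m hm => ycSeq_eq_of_notMemA x a b (fun hA => hcl m hA hm)
      have hvn : ycSeq p x a n = ycSeq p x b n := hval n (by simp)
      simp only [PerSet, Set.mem_setOf_eq]
      constructor
      · intro h m hm
        rw [← hval m hm, ← hvn]
        exact h m hm
      · intro h m hm
        rw [hval m hm, hvn]
        exact h m hm
  · intro n hn
    by_cases hA : n ∈ Aset p
    · exact absurd hn (ycSeq_not_perset hp x ha hb hab a hA (by simp))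
    · exact ycSeq_eq_of_notMemA x a b hA

lemma aperiodic_coord_eq {p : ℕ → ℕ} (hp : FastGrowing p) (x : ℕ → X) {a : X}
    (hx : Filter.Tendsto x Filter.atTop (nhds a)) {w : ℤ → X}
    (hw : w ∈ orbitClosure (oxtoby p x)) {n : ℤ}
    (hn : ∀ i, n ∉ PerSet (p i) w) : w n = a := by
  have hd : ∀ ε : ℝ, 0 < ε → dist (w n) a ≤ 2 * ε := by
    intro ε hε
    rw [Metric.tendsto_atTop] at hx
    obtain ⟨N, hN⟩ := hx ε hε
    have hnp := hn N
    simp only [PerSet, Set.mem_setOf_eq] at hnp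
    push_neg at hnp
    obtain ⟨m', hdvd, hne⟩ := hnp
    have hdpos : 0 < dist (w m') (w n) := dist_pos.2 hne
    set δ := min ε (dist (w m') (w n) / 3) with hδ
    have hδpos : 0 < δ := lt_min hε (by linarith)
    obtain ⟨m, h1, h2⟩ := orbitClosure_approx hw n m' hδpos
    have hnm : n + m ∉ oxDefined p N := by
      intro hmem
      have heq : oxtoby p x (m' + m) = oxtoby p x (n + m) :=
        oxtoby_perset hp x hmem (by
          have he : m' + m - (n + m) = m' - n := by ring
          rw [he]; exact hdvd)
      have htri : dist (w m') (w n) ≤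
          dist (w m') (oxtoby p x (m' + m)) + dist (oxtoby p x (n + m)) (w n) := by
        rw [heq]
        exact dist_triangle _ _ _
      have hd1 : dist (oxtoby p x (n + m)) (w n) < δ := by rw [dist_comm]; exact h1
      have hδ3 : δ ≤ dist (w m') (w n) / 3 := min_le_right _ _
      linarith
    obtain ⟨j, hj⟩ := oxDefined_exists hp (n + m)
    have hs : n + m ∈ oxDefined p (sInf {j : ℕ | n + m ∈ oxDefined p j}) :=
      Nat.sInf_mem (⟨j, hj⟩ : {j : ℕ | n + m ∈ oxDefined p j}.Nonempty)
    have hsN : N < sInf {j : ℕ | n + m ∈ oxDefined p j} := by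
      by_contra hc
      push_neg at hc
      exact hnm (oxDefined_mono hc hs)
    have hzv : oxtoby p x (n + m) = x (sInf {j : ℕ | n + m ∈ oxDefined p j}) := rfl
    have hxa : dist (x (sInf {j : ℕ | n + m ∈ oxDefined p j})) a < ε := hN _ (by omega)
    have htri2 : dist (w n) a ≤ dist (w n) (oxtoby p x (n + m)) + dist (oxtoby p x (n + m)) a :=
      dist_triangle _ _ _
    rw [hzv] at htri2
    have hδε : δ ≤ ε := min_le_left _ _
    rw [hzv] at h1
    linarith
  have h0 : dist (w n) a ≤ 0 := by
    by_contra hc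
    push_neg at hc
    have := hd (dist (w n) a / 4) (by linarith)
    linarith
  exact dist_le_zero.1 h0

end Aux5

/-- Proposition `SIN`: `L((x_i))` is a singleton iff any two points of the
Oxtoby system with the same `p_i`-skeleton for all `i` are equal (i.e. the canonical
factor map to the maximal equicontinuous factor is an isomorphism). -/
theorem oxtoby_factor_injective_iff_singleton {X : Type*} [MetricSpace X] [CompactSpace X]
    (x : ℕ → X) (p : ℕ → ℕ) (hp : FastGrowing p) :
    (∃ a : X, omegaLimitSet x = {a}) ↔
      ∀ y ∈ orbitClosure (oxtoby p x), ∀ y' ∈ orbitClosure (oxtoby p x),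
        (∀ i, SamePSkeleton (p i) y y') → y = y' := by
  constructor
  · rintro ⟨a, hA⟩ y hy y' hy' hsk
    have hx : Filter.Tendsto x Filter.atTop (nhds a) := tendsto_of_omega_singleton hA
    funext n
    by_cases hper : ∃ i, n ∈ PerSet (p i) y
    · obtain ⟨i, hi⟩ := hper
      exact (hsk i).2 n hi
    · push_neg at hper
      have hper' : ∀ i, n ∉ PerSet (p i) y' := fun i => by
        rw [← (hsk i).1]; exact hper i
      rw [aperiodic_coord_eq hp x hx hy hper, aperiodic_coord_eq hp x hx hy' hper']
  · intro H
    by_contra hno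
    obtain ⟨a, -, φ, hφ, hl⟩ :=
      isCompact_univ.tendsto_subseq (fun k => Set.mem_univ (x k))
    have ha : a ∈ omegaLimitSet x := ⟨φ, hφ, hl⟩
    have hne : omegaLimitSet x ≠ {a} := fun h => hno ⟨a, h⟩
    have hbex : ∃ b ∈ omegaLimitSet x, b ≠ a := by
      by_contra hc
      push_neg at hc
      exact hne (Set.eq_singleton_iff_unique_mem.2 ⟨ha, fun b hb => hc b hb⟩)
    obtain ⟨b, hb, hba⟩ := hbex
    have hab : a ≠ b := hba.symm
    have heq := H _ (ycSeq_mem hp x ha) _ (ycSeq_mem hp x hb)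
      (fun i => ycSeq_samePSkeleton hp x ha hb hab i)
    apply hab
    rw [← ycSeq_zero hp x a, ← ycSeq_zero hp x b, heq]
end

section
/- Let (X,d) be a compact metric space, let (x_i) and (x'_i) be sequences of points of X, and let (p_i) be a fast growing sequence. Let z = z((p_i),(x_i)) and z' = z((p_i),(x'_i)) be the corresponding Oxtoby sequences and suppose both L((x_i)) and L((x'_i)) contain at least two points. Then for every conjugacy f between the systems (O̅(z),S) and (O̅(z'),S), there exists m ∈ ℤ with f(z) = S^m z'. -/
open Filter Topology

/-!
Let `w = f z`. Along some ultrafilter `W` on `ℤ` the shifts `S^m z'` converge to `w`; the residues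
of `W` modulo the `p i` form a point `c` of the odometer `lim ℤ/p i`, and `w n = z' (n + c i)`
whenever `n + c i` is filled by step `i`. If `c` is an integer `k`, this says `w = S^k z'`.

Otherwise choose a point `λ` of the odometer such that `λ i` is first filled in step `i + 1`
(so `z (λ i) = x (i + 1)`) while `n + λ + c` is eventually filled for every `n : ℤ`. It is built
greedily block by block; the greedy choice can only stay blocked forever when `c` is an integer.
For `a ∈ L(x)`, limits `v` of shifts `S^(λ (ψ j)) z` with `x (ψ j + 1) → a` satisfy `v 0 = a`,
while `f v` only depends on `w` and `λ`. Injectivity of `f` forces `L(x)` to be a single point.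
-/

namespace FastGrowing

variable {p : ℕ → ℕ}

theorem pos (hp : FastGrowing p) (i : ℕ) : 0 < p i := by
  induction i with
  | zero => simp [hp.1]
  | succ i ih => linarith [hp.2.2.2 i]

theorem dvd_of_le (hp : FastGrowing p) {i j : ℕ} (h : i ≤ j) : p i ∣ p j := by
  induction j, h using Nat.le_induction with
  | base => rfl
  | succ j _ ih => exact ih.trans (hp.2.1 j)

theorem intCast_dvd_of_le (hp : FastGrowing p) {i j : ℕ} (h : i ≤ j) : (p i : ℤ) ∣ p j :=
  Int.natCast_dvd_natCast.mpr (hp.dvd_of_le h)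

theorem three_mul_le (hp : FastGrowing p) (i : ℕ) : 3 * (p i : ℤ) ≤ p (i + 1) := by
  exact_mod_cast hp.2.2.2 i

theorem tendsto_atTop (hp : FastGrowing p) : Tendsto (fun i => (p i : ℤ)) atTop atTop := by
  have h : ∀ i : ℕ, (i : ℤ) ≤ p i := fun i => by
    induction i with
    | zero => simp
    | succ i ih => push_cast; linarith [hp.three_mul_le i, hp.pos i]
  exact tendsto_atTop_mono h tendsto_natCast_atTop_atTop

end FastGrowing

/-- The positions that step `j + 1` of the Oxtoby construction fills unless they are filled
already: the first and the last `p j`-block of every `p (j + 1)`-block. -/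
def InOuterBlock (p : ℕ → ℕ) (j : ℕ) (n : ℤ) : Prop :=
  n % p (j + 1) < p j ∨ (p (j + 1) : ℤ) - p j ≤ n % p (j + 1)

theorem inOuterBlock_congr {p : ℕ → ℕ} {j : ℕ} {m n : ℤ} (h : (p (j + 1) : ℤ) ∣ m - n) :
    InOuterBlock p j m ↔ InOuterBlock p j n := by
  rw [InOuterBlock, InOuterBlock, (Int.modEq_iff_dvd.mpr h).eq]

theorem dvd_ediv_or_dvd_ediv_add_one_iff {a q : ℤ} (ha : 0 < a) (hq : 0 < q) (n : ℤ) :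
    q ∣ n / a ∨ q ∣ n / a + 1 ↔ n % (a * q) < a ∨ a * q - a ≤ n % (a * q) := by
  have hsplit : n % (a * q) = n % a + a * (n / a % q) := by
    rw [Int.emod_def, Int.emod_def, Int.emod_def, ← Int.ediv_ediv_of_nonneg ha.le]
    ring
  have hr := Int.emod_nonneg (n / a) hq.ne'
  have hr' := Int.emod_lt_of_pos (n / a) hq
  have ht := Int.emod_nonneg n ha.ne'
  have ht' := Int.emod_lt_of_pos n ha
  rw [hsplit, Int.dvd_iff_emod_eq_zero, Int.dvd_iff_emod_eq_zero, ← Int.emod_add_emod (n / a)]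
  set r := n / a % q
  have hlast : (r + 1) % q = 0 ↔ r = q - 1 := by
    rcases (show r + 1 < q ∨ r + 1 = q by omega) with h | h
    · rw [Int.emod_eq_of_lt (by omega) h]; omega
    · rw [h, Int.emod_self]; omega
  rw [hlast]
  constructor
  · rintro (h | h) <;> rw [h] <;> [left; right] <;> nlinarith
  · intro h
    by_contra hr0
    have : 1 ≤ r := by omega
    have : r ≤ q - 2 := by omega
    rcases h with h | h <;> nlinarith

section OxtobyPositions

variable {p : ℕ → ℕ}

theorem FastGrowing.mem_oxDefined_succ_iff (hp : FastGrowing p) (i : ℕ) (n : ℤ) :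
    n ∈ oxDefined p (i + 1) ↔ n ∈ oxDefined p i ∨ InOuterBlock p i n := by
  have ha : (0 : ℤ) < p i := by exact_mod_cast hp.pos i
  have hq : (0 : ℤ) < ((p (i + 1) / p i : ℕ) : ℤ) := by
    exact_mod_cast Nat.div_pos (Nat.le_of_dvd (hp.pos _) (hp.2.1 i)) (hp.pos i)
  have hP : (p (i + 1) : ℤ) = p i * ((p (i + 1) / p i : ℕ) : ℤ) := by
    exact_mod_cast (Nat.mul_div_cancel' (hp.2.1 i)).symm
  have hblock : ∀ k : ℤ, k * p i ≤ n ∧ n < (k + 1) * p i ↔ k = n / p i := fun k => by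
    rw [eq_comm, Int.ediv_eq_iff_of_pos ha]
    constructor <;> rintro ⟨h1, h2⟩ <;> constructor <;> linarith
  simp only [oxDefined, Set.mem_union, Set.mem_ofPred_eq]
  rw [InOuterBlock, hP, ← dvd_ediv_or_dvd_ediv_add_one_iff ha hq]
  constructor
  · rintro (h | ⟨k, hk, h1, h2, -⟩)
    · exact Or.inl h
    · rw [(hblock k).mp ⟨h1, h2⟩] at hk
      exact Or.inr hk
  · rintro (h | h)
    · exact Or.inl h
    · by_cases hn : n ∈ oxDefined p i
      · exact Or.inl hn
      · exact Or.inr ⟨n / p i, h, ((hblock _).mpr rfl).1, ((hblock _).mpr rfl).2, hn⟩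

theorem FastGrowing.mem_oxDefined_iff (hp : FastGrowing p) (i : ℕ) (n : ℤ) :
    n ∈ oxDefined p i ↔ ∃ j < i, InOuterBlock p j n := by
  induction i with
  | zero => simp [oxDefined]
  | succ i ih =>
    rw [hp.mem_oxDefined_succ_iff, ih]
    constructor
    · rintro (⟨j, hj, h⟩ | h)
      exacts [⟨j, by omega, h⟩, ⟨i, by omega, h⟩]
    · rintro ⟨j, hj, h⟩
      rcases Nat.lt_succ_iff_lt_or_eq.mp hj with hj | rfl
      exacts [Or.inl ⟨j, hj, h⟩, Or.inr h]

theorem FastGrowing.oxDefined_mono (hp : FastGrowing p) : Monotone (oxDefined p) := by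
  intro i j hij n
  simp only [hp.mem_oxDefined_iff]
  exact fun ⟨k, hk, h⟩ => ⟨k, by omega, h⟩

theorem FastGrowing.mem_oxDefined_congr (hp : FastGrowing p) {i : ℕ} {m n : ℤ}
    (h : (p i : ℤ) ∣ m - n) : m ∈ oxDefined p i ↔ n ∈ oxDefined p i := by
  simp only [hp.mem_oxDefined_iff]
  refine exists_congr fun j => and_congr_right fun hj => inOuterBlock_congr ?_
  exact (hp.intCast_dvd_of_le (by omega : j + 1 ≤ i)).trans h

theorem FastGrowing.exists_mem_oxDefined (hp : FastGrowing p) (n : ℤ) :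
    ∃ i, n ∈ oxDefined p i := by
  obtain ⟨i, hi⟩ := (hp.tendsto_atTop.eventually_gt_atTop |n|).exists
  have hle : (p i : ℤ) ≤ p (i + 1) := by linarith [hp.three_mul_le i, hp.pos i]
  refine ⟨i + 1, (hp.mem_oxDefined_succ_iff i n).mpr (Or.inr ?_)⟩
  rcases le_or_gt 0 n with hn | hn
  · rw [abs_of_nonneg hn] at hi
    left
    rw [Int.emod_eq_of_lt hn (by omega)]
    exact hi
  · rw [abs_of_neg hn] at hi
    right
    rw [← Int.add_mul_emod_self_right n 1, Int.emod_eq_of_lt (by omega) (by omega)]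
    omega

theorem FastGrowing.oxDefined_subset_perSet {X : Type*} (hp : FastGrowing p) (x : ℕ → X)
    (i : ℕ) : oxDefined p i ⊆ PerSet (p i) (oxtoby p x) := by
  intro n hn m hmn
  have hm : m ∈ oxDefined p i := (hp.mem_oxDefined_congr hmn).mpr hn
  have hlow : ∀ k ≤ i, m ∈ oxDefined p k ↔ n ∈ oxDefined p k := fun k hk =>
    hp.mem_oxDefined_congr ((hp.intCast_dvd_of_le hk).trans hmn)
  have hm' : sInf {k | m ∈ oxDefined p k} ≤ i := Nat.sInf_le hm
  have hn' : sInf {k | n ∈ oxDefined p k} ≤ i := Nat.sInf_le hn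
  have hmS : m ∈ oxDefined p (sInf {k | m ∈ oxDefined p k}) :=
    Nat.sInf_mem (s := {k | m ∈ oxDefined p k}) ⟨i, hm⟩
  have hnS : n ∈ oxDefined p (sInf {k | n ∈ oxDefined p k}) :=
    Nat.sInf_mem (s := {k | n ∈ oxDefined p k}) ⟨i, hn⟩
  simp only [oxtoby]
  congr 1
  exact le_antisymm (Nat.sInf_le ((hlow _ hn').mpr hnS)) (Nat.sInf_le ((hlow _ hm').mp hmS))

theorem FastGrowing.oxtoby_eq_of_mem_succ {X : Type*} (hp : FastGrowing p) (x : ℕ → X)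
    {i : ℕ} {n : ℤ} (h : n ∈ oxDefined p (i + 1)) (h' : n ∉ oxDefined p i) :
    oxtoby p x n = x (i + 1) := by
  have hle : sInf {k | n ∈ oxDefined p k} ≤ i + 1 := Nat.sInf_le h
  have hnS : n ∈ oxDefined p (sInf {k | n ∈ oxDefined p k}) :=
    Nat.sInf_mem (s := {k | n ∈ oxDefined p k}) ⟨i + 1, h⟩
  have hgt : ¬ sInf {k | n ∈ oxDefined p k} ≤ i := fun hle' => h' (hp.oxDefined_mono hle' hnS)
  simp only [oxtoby]
  congr 1
  omega

theorem FastGrowing.exists_mem_perSet_oxtoby {X : Type*} (hp : FastGrowing p) (x : ℕ → X)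
    (n : ℤ) : ∃ i, n ∈ PerSet (p i) (oxtoby p x) :=
  (hp.exists_mem_oxDefined n).imp fun i hi => hp.oxDefined_subset_perSet x i hi

end OxtobyPositions

/-- `c` represents a point of the odometer `lim ℤ/p i` by a sequence of lifts `c i` of its
coordinates. -/
def IsCoherent (p : ℕ → ℕ) (c : ℕ → ℤ) : Prop := ∀ i, (p i : ℤ) ∣ c (i + 1) - c i

def IsIntegerPoint (p : ℕ → ℕ) (c : ℕ → ℤ) : Prop := ∃ m : ℤ, ∀ i, (p i : ℤ) ∣ c i - m

section Odometer

variable {p : ℕ → ℕ} {c d : ℕ → ℤ}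

theorem IsCoherent.dvd_sub (hp : FastGrowing p) (hc : IsCoherent p c) {i j : ℕ} (h : i ≤ j) :
    (p i : ℤ) ∣ c j - c i := by
  induction j, h using Nat.le_induction with
  | base => simp
  | succ j hij ih =>
    rw [← sub_add_sub_cancel]
    exact ((hp.intCast_dvd_of_le hij).trans (hc j)).add ih

theorem IsCoherent.add (hc : IsCoherent p c) (hd : IsCoherent p d) : IsCoherent p (c + d) :=
  fun i => by simpa only [Pi.add_apply, add_sub_add_comm] using (hc i).add (hd i)

theorem IsCoherent.congr (hp : FastGrowing p) (hc : IsCoherent p c)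
    (h : ∀ i, (p i : ℤ) ∣ c i - d i) : IsCoherent p d := fun i => by
  rw [show d (i + 1) - d i = c (i + 1) - c i - (c (i + 1) - d (i + 1)) + (c i - d i) by ring]
  exact ((hc i).sub ((hp.intCast_dvd_of_le (Nat.le_succ i)).trans (h (i + 1)))).add (h i)

theorem IsIntegerPoint.congr (hc : IsIntegerPoint p c) (h : ∀ i, (p i : ℤ) ∣ c i - d i) :
    IsIntegerPoint p d := by
  obtain ⟨m, hm⟩ := hc
  exact ⟨m, fun i => by simpa using (hm i).sub (h i)⟩

theorem IsCoherent.isIntegerPoint_of_frequently_dvd (hp : FastGrowing p) (hc : IsCoherent p c)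
    {m : ℤ} (h : ∃ᶠ j in atTop, (p j : ℤ) ∣ c j - m) : IsIntegerPoint p c := by
  refine ⟨m, fun i => ?_⟩
  obtain ⟨j, hj, hij⟩ := (h.and_eventually (eventually_ge_atTop i)).exists
  simpa using ((hp.intCast_dvd_of_le hij).trans hj).sub (hc.dvd_sub hp hij)

theorem IsCoherent.isIntegerPoint_of_frequently_abs_le (hp : FastGrowing p)
    (hc : IsCoherent p c) {B : ℤ} (h : ∃ᶠ j in atTop, |c j| ≤ B) : IsIntegerPoint p c := by
  obtain ⟨i, hi⟩ := (hp.tendsto_atTop.eventually_gt_atTop (2 * B)).exists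
  obtain ⟨j₀, hj₀, hij₀⟩ := (h.and_eventually (eventually_ge_atTop i)).exists
  refine hc.isIntegerPoint_of_frequently_dvd hp (m := c j₀) ?_
  refine (h.and_eventually (eventually_ge_atTop i)).mono fun j ⟨hj, hij⟩ => ?_
  have hdvd : (p i : ℤ) ∣ c j - c j₀ := by
    simpa using (hc.dvd_sub hp hij).sub (hc.dvd_sub hp hij₀)
  have hlt : |c j - c j₀| < p i := by
    rw [abs_le] at hj hj₀
    rw [abs_lt]
    constructor <;> linarith
  rw [Int.eq_zero_of_abs_lt_dvd hdvd hlt]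
  exact dvd_zero _

theorem IsCoherent.eventually_lt_abs (hp : FastGrowing p) (hc : IsCoherent p c)
    (hnc : ¬ IsIntegerPoint p c) (B : ℤ) :
    ∀ᶠ j in atTop, B < |c j| ∧ B < |c j - p j| := by
  have hsub : ∀ i, (p i : ℤ) ∣ c i - (c i - p i) := fun i => by simp
  refine Eventually.and ?_ ?_ <;>
    refine (not_frequently.mp fun h => hnc ?_).mono fun j => not_le.mp
  · exact hc.isIntegerPoint_of_frequently_abs_le hp h
  · exact ((hc.congr hp hsub).isIntegerPoint_of_frequently_abs_le hp h).congr fun i => by simp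

theorem FastGrowing.exists_isCoherent_eventually_dvd (hp : FastGrowing p) (W : Ultrafilter ℤ) :
    ∃ c, IsCoherent p c ∧ ∀ i, ∀ᶠ m in (W : Filter ℤ), (p i : ℤ) ∣ m - c i := by
  have hres : ∀ i, ∃ r : ℤ, ∀ᶠ m in (W : Filter ℤ), (p i : ℤ) ∣ m - r := fun i => by
    have : NeZero (p i) := ⟨(hp.pos i).ne'⟩
    obtain ⟨r, hr⟩ := (W.map (Int.cast : ℤ → ZMod (p i))).eq_pure_of_finite
    obtain ⟨r, rfl⟩ := ZMod.intCast_surjective r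
    have : Int.cast ⁻¹' {(r : ZMod (p i))} ∈ W := by
      rw [← Ultrafilter.mem_map, hr]
      exact Set.mem_singleton _
    exact ⟨r, Filter.mem_of_superset this fun m hm =>
      (ZMod.intCast_eq_intCast_iff_dvd_sub _ _ _).mp (Set.mem_singleton_iff.mp hm).symm⟩
  choose c hc using hres
  refine ⟨c, fun i => ?_, hc⟩
  obtain ⟨m, hm, hm'⟩ := ((hc i).and (hc (i + 1))).exists
  simpa using ((hp.intCast_dvd_of_le (Nat.le_succ i)).trans hm').neg_right.add hm

end Odometer

def toMiddle (a P x : ℤ) : ℤ := if x < a then x + a else if x < P - a then x else x - a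

section ToMiddle

variable {a P x : ℤ}

theorem toMiddle_mem_Ico (h3 : 3 * a ≤ P) (hx : 0 ≤ x) (hxP : x < P) :
    a ≤ toMiddle a P x ∧ toMiddle a P x < P - a := by
  unfold toMiddle
  split_ifs <;> omega

theorem dvd_toMiddle_sub : a ∣ toMiddle a P x - x := by
  unfold toMiddle
  split_ifs <;> simp

theorem toMiddle_add_emod_of_le {s c : ℤ} (hs : 0 ≤ s) (hsa : s < a) (haP : 2 * a ≤ P)
    (hx : a ≤ (s - c) % P) :
    (toMiddle a P ((s - c) % P) + c) % P = s ∨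
      (toMiddle a P ((s - c) % P) + c) % P = s + P - a := by
  have hx' : (s - c) % P < P := Int.emod_lt_of_pos _ (by omega)
  have hmod : (s - c) % P + c ≡ s [ZMOD P] := by
    simpa using (Int.mod_modEq (s - c) P).add_right c
  unfold toMiddle
  rw [if_neg (not_lt.mpr hx)]
  split_ifs
  · rw [hmod.eq, Int.emod_eq_of_lt hs (by omega)]
    exact Or.inl rfl
  · rw [sub_add_eq_add_sub, (hmod.sub_right a).eq, ← Int.add_mul_emod_self_right _ 1,
      Int.emod_eq_of_lt (by omega) (by omega)]
    exact Or.inr (by ring)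

theorem toMiddle_add_emod_of_lt {s c : ℤ} (hs : 0 ≤ s) (hsa : s < a) (haP : 2 * a ≤ P)
    (hx : (s - c) % P < a) :
    (toMiddle a P ((s - c) % P) + c) % P = s + a := by
  have hmod : (s - c) % P + c + a ≡ s + a [ZMOD P] := by
    simpa using ((Int.mod_modEq (s - c) P).add_right c).add_right a
  unfold toMiddle
  rw [if_pos hx, add_right_comm, hmod.eq, Int.emod_eq_of_lt (by omega) (by omega)]

end ToMiddle

/-- A point `λ` of the odometer with every `λ (j + 1)` in the middle blocks of `[0, p (j + 1))`,
so that no `λ i` is filled before step `i + 1`; within that constraint `λ (j + 1)` is chosen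
to put `λ + c` into an outer block at level `j + 1` whenever the carry allows it. -/
def greedy (p : ℕ → ℕ) (c : ℕ → ℤ) : ℕ → ℤ
  | 0 => 0
  | j + 1 => toMiddle (p j) (p (j + 1)) (((greedy p c j + c j) % p j - c (j + 1)) % p (j + 1))

def greedySum (p : ℕ → ℕ) (c : ℕ → ℤ) (j : ℕ) : ℤ := (greedy p c j + c j) % p j

section Greedy

variable {p : ℕ → ℕ} {c : ℕ → ℤ}

theorem FastGrowing.greedy_succ_mem_Ico (hp : FastGrowing p) (j : ℕ) :
    p j ≤ greedy p c (j + 1) ∧ greedy p c (j + 1) < p (j + 1) - p j := by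
  have hP : (0 : ℤ) < p (j + 1) := by exact_mod_cast hp.pos (j + 1)
  exact toMiddle_mem_Ico (hp.three_mul_le j) (Int.emod_nonneg _ hP.ne')
    (Int.emod_lt_of_pos _ hP)

theorem FastGrowing.greedy_mem_Ico (hp : FastGrowing p) (j : ℕ) :
    0 ≤ greedy p c j ∧ greedy p c j < p j := by
  cases j with
  | zero => simp [greedy, hp.1]
  | succ j =>
    have := hp.greedy_succ_mem_Ico (c := c) j
    have := hp.pos j
    omega

theorem FastGrowing.dvd_greedySum_sub_emod_sub_greedy (hp : FastGrowing p) (hc : IsCoherent p c)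
    (j : ℕ) :
    (p j : ℤ) ∣ (greedySum p c j - c (j + 1)) % p (j + 1) - greedy p c j := by
  have hx := ((Int.mod_modEq (greedySum p c j - c (j + 1)) (p (j + 1))).of_dvd
    (hp.intCast_dvd_of_le (Nat.le_succ j)))
  have hs := Int.mod_modEq (greedy p c j + c j) (p j)
  have hcj : c j ≡ c (j + 1) [ZMOD p j] := Int.modEq_iff_dvd.mpr (hc j)
  have := hx.trans (hs.sub hcj.symm)
  rw [add_sub_cancel_right] at this
  exact this.symm.dvd

theorem FastGrowing.isCoherent_greedy (hp : FastGrowing p) (hc : IsCoherent p c) :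
    IsCoherent p (greedy p c) := fun j => by
  rw [← sub_add_sub_cancel]
  exact dvd_toMiddle_sub.add (hp.dvd_greedySum_sub_emod_sub_greedy hc j)

theorem FastGrowing.greedy_not_mem_oxDefined (hp : FastGrowing p) (hc : IsCoherent p c)
    (i : ℕ) : greedy p c i ∉ oxDefined p i := by
  rw [hp.mem_oxDefined_iff]
  rintro ⟨j, hji, hj⟩
  rw [inOuterBlock_congr ((hp.isCoherent_greedy hc).dvd_sub hp hji)] at hj
  obtain ⟨h1, h2⟩ := hp.greedy_succ_mem_Ico (c := c) j
  have := hp.pos j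
  rw [InOuterBlock, Int.emod_eq_of_lt (by omega) (by omega)] at hj
  omega

theorem FastGrowing.oxtoby_greedy {X : Type*} (hp : FastGrowing p) (hc : IsCoherent p c)
    (x : ℕ → X) (i : ℕ) : oxtoby p x (greedy p c i) = x (i + 1) := by
  refine hp.oxtoby_eq_of_mem_succ x ((hp.mem_oxDefined_succ_iff i _).mpr (Or.inr (Or.inl ?_)))
    (hp.greedy_not_mem_oxDefined hc i)
  obtain ⟨h0, hlt⟩ := hp.greedy_mem_Ico (c := c) i
  rw [Int.emod_eq_of_lt h0 (by linarith [hp.three_mul_le i, hp.pos i])]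
  exact hlt

theorem FastGrowing.greedySum_succ_of_le (hp : FastGrowing p) {j : ℕ}
    (h : p j ≤ (greedySum p c j - c (j + 1)) % p (j + 1)) :
    greedySum p c (j + 1) = greedySum p c j ∨
      greedySum p c (j + 1) = greedySum p c j + p (j + 1) - p j := by
  have hpos : (0 : ℤ) < p j := by exact_mod_cast hp.pos j
  exact toMiddle_add_emod_of_le (Int.emod_nonneg _ hpos.ne') (Int.emod_lt_of_pos _ hpos)
    (by linarith [hp.three_mul_le j]) h

theorem FastGrowing.greedySum_succ_of_lt (hp : FastGrowing p) (hc : IsCoherent p c) {j : ℕ}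
    (h : (greedySum p c j - c (j + 1)) % p (j + 1) < p j) :
    greedySum p c (j + 1) - greedy p c (j + 1) = greedySum p c j - greedy p c j ∧
      (p (j + 1) : ℤ) ∣ c (j + 1) - (greedySum p c j - greedy p c j) := by
  have hpos : (0 : ℤ) < p j := by exact_mod_cast hp.pos j
  have hP : (0 : ℤ) < p (j + 1) := by exact_mod_cast hp.pos (j + 1)
  have htarget : (greedySum p c j - c (j + 1)) % p (j + 1) = greedy p c j := by
    obtain ⟨h0, hlt⟩ := hp.greedy_mem_Ico (c := c) j
    have := Int.emod_nonneg (greedySum p c j - c (j + 1)) hP.ne'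
    refine eq_of_sub_eq_zero
      (Int.eq_zero_of_abs_lt_dvd (hp.dvd_greedySum_sub_emod_sub_greedy hc j) ?_)
    rw [abs_lt]
    constructor <;> linarith
  have hsum : greedySum p c (j + 1) = greedySum p c j + p j :=
    toMiddle_add_emod_of_lt (Int.emod_nonneg _ hpos.ne') (Int.emod_lt_of_pos _ hpos)
      (by linarith [hp.three_mul_le j]) h
  have hgreedy : greedy p c (j + 1) = greedy p c j + p j := by
    show toMiddle _ _ ((greedySum p c j - c (j + 1)) % p (j + 1)) = _
    rw [toMiddle, if_pos h, htarget]
  refine ⟨by rw [hsum, hgreedy]; ring, ?_⟩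
  rw [← htarget, ← Int.dvd_neg, neg_sub, sub_right_comm]
  exact (Int.mod_modEq _ _).dvd

/-- As long as the greedy choice is blocked, `greedySum - greedy` stays constant and `c` is
congruent to it, so blocking forever would make `c` an integer point. -/
theorem FastGrowing.frequently_greedySum_succ (hp : FastGrowing p) (hc : IsCoherent p c)
    (hnc : ¬ IsIntegerPoint p c) :
    ∃ᶠ j in atTop, greedySum p c (j + 1) = greedySum p c j ∨
      greedySum p c (j + 1) = greedySum p c j + p (j + 1) - p j := by
  intro h
  obtain ⟨J, hJ⟩ := eventually_atTop.mp h
  have hblocked : ∀ j ≥ J, (greedySum p c j - c (j + 1)) % p (j + 1) < p j :=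
    fun j hj => not_le.mp fun hle => hJ j hj (hp.greedySum_succ_of_le hle)
  have hconst : ∀ j ≥ J, greedySum p c j - greedy p c j = greedySum p c J - greedy p c J := by
    intro j hj
    induction j, hj using Nat.le_induction with
    | base => rfl
    | succ j hj ih => exact (hp.greedySum_succ_of_lt hc (hblocked j hj)).1.trans ih
  refine hnc (hc.isIntegerPoint_of_frequently_dvd hp (m := greedySum p c J - greedy p c J)
    (eventually_atTop.mpr ⟨J + 1, fun j hj => ?_⟩).frequently)
  obtain ⟨j, rfl⟩ : ∃ k, j = k + 1 := ⟨j - 1, by omega⟩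
  rw [← hconst j (by omega)]
  exact (hp.greedySum_succ_of_lt hc (hblocked j (by omega))).2

theorem FastGrowing.exists_add_greedy_add_mem_oxDefined (hp : FastGrowing p)
    (hc : IsCoherent p c) (hnc : ¬ IsIntegerPoint p c) (n : ℤ) :
    ∃ i, n + greedy p c i + c i ∈ oxDefined p i := by
  have hmod : ∀ i, (p i : ℤ) ∣ (n + greedy p c i + c i) - (n + greedySum p c i) := fun i => by
    rw [show n + greedy p c i + c i - (n + greedySum p c i)
      = greedy p c i + c i - greedySum p c i by ring]
    exact (Int.mod_modEq _ _).dvd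
  have hsum : IsCoherent p (greedySum p c) :=
    ((hp.isCoherent_greedy hc).add hc).congr hp fun i => (Int.mod_modEq _ _).dvd
  by_cases hint : IsIntegerPoint p (greedySum p c)
  · obtain ⟨m, hm⟩ := hint
    obtain ⟨i, hi⟩ := hp.exists_mem_oxDefined (n + m)
    refine ⟨i, (hp.mem_oxDefined_congr ?_).mpr hi⟩
    rw [← sub_add_sub_cancel _ (n + greedySum p c i), add_sub_add_left_eq_sub]
    exact (hmod i).add (hm i)
  · obtain ⟨j, ⟨hlo, hhi⟩, hhit⟩ :=
      ((hsum.eventually_lt_abs hp hint |n|).and_frequently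
        (hp.frequently_greedySum_succ hc hnc)).exists
    refine ⟨j + 1, (hp.mem_oxDefined_congr (hmod (j + 1))).mpr
      ((hp.mem_oxDefined_succ_iff j _).mpr (Or.inr ?_))⟩
    have hpos : (0 : ℤ) < p j := by exact_mod_cast hp.pos j
    have h0 : 0 ≤ greedySum p c j := Int.emod_nonneg _ hpos.ne'
    have h1 : greedySum p c j < p j := Int.emod_lt_of_pos _ hpos
    have h3 := hp.three_mul_le j
    rw [abs_of_nonneg h0] at hlo
    rw [abs_of_neg (show greedySum p c j - p j < 0 by omega)] at hhi
    have := neg_abs_le n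
    have := le_abs_self n
    rcases hhit with h | h <;> rw [h, InOuterBlock]
    · left
      rw [Int.emod_eq_of_lt (by omega) (by omega)]
      omega
    · right
      rw [Int.emod_eq_of_lt (by omega) (by omega)]
      omega

end Greedy

section Shift

variable {X : Type*}

theorem shiftZ_shiftZ (a b : ℤ) (z : ℤ → X) : shiftZ a (shiftZ b z) = shiftZ (a + b) z :=
  funext fun n => by simp only [shiftZ, add_assoc]

theorem shiftZ_zero (z : ℤ → X) : shiftZ 0 z = z :=
  funext fun n => by simp only [shiftZ, add_zero]

theorem mem_perSet_of_dvd_sub {P : ℕ} {z : ℤ → X} {k n : ℤ} (hn : n ∈ PerSet P z)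
    (h : (P : ℤ) ∣ k - n) : k ∈ PerSet P z := fun l hl => by
  rw [hn l (by simpa using hl.add h), hn k h]

variable [TopologicalSpace X]

theorem continuous_shiftZ (m : ℤ) : Continuous (shiftZ m : (ℤ → X) → ℤ → X) :=
  continuous_pi fun n => continuous_apply (n + m)

theorem mem_orbitClosure_self (z : ℤ → X) : z ∈ orbitClosure z :=
  subset_closure ⟨0, (shiftZ_zero z).symm⟩

theorem shiftZ_mem_orbitClosure {z v : ℤ → X} (m : ℤ) (hv : v ∈ orbitClosure z) :
    shiftZ m v ∈ orbitClosure z :=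
  map_mem_closure (continuous_shiftZ m) hv fun _ ⟨k, hk⟩ => ⟨m + k, by rw [hk, shiftZ_shiftZ]⟩

theorem exists_ultrafilter_tendsto_shiftZ {z w : ℤ → X} (hw : w ∈ orbitClosure z) :
    ∃ W : Ultrafilter ℤ, Tendsto (fun m => shiftZ m z) W (𝓝 w) := by
  have : (comap (fun m => shiftZ m z) (𝓝 w)).NeBot := comap_neBot_iff.mpr fun t ht => by
    obtain ⟨_, hy, m, rfl⟩ := mem_closure_iff_nhds.mp hw t ht
    exact ⟨m, hy⟩
  exact ⟨Ultrafilter.of _, tendsto_comap.mono_left (Ultrafilter.of_le _)⟩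

theorem exists_tendsto_shiftZ [CompactSpace X] (z : ℤ → X) (m : ℕ → ℤ) :
    ∃ v, Tendsto (fun j => shiftZ (m j) z) (hyperfilter ℕ) (𝓝 v) := by
  obtain ⟨v, -, hv⟩ := isCompact_univ.ultrafilter_le_nhds
    ((hyperfilter ℕ).map fun j => shiftZ (m j) z) (le_principal_iff.mpr univ_mem)
  exact ⟨v, hv⟩

section Evaluation

variable [T2Space X] {α : Type*} {F : Filter α} [F.NeBot] {m : α → ℤ} {z w : ℤ → X}

theorem apply_eq_of_tendsto_shiftZ (h : Tendsto (fun a => shiftZ (m a) z) F (𝓝 w)) {P : ℕ}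
    {c n : ℤ} (hm : ∀ᶠ a in F, (P : ℤ) ∣ m a - c) (hn : n + c ∈ PerSet P z) :
    w n = z (n + c) := by
  have hlim : Tendsto (fun a => z (n + m a)) F (𝓝 (w n)) :=
    ((continuous_apply n).tendsto w).comp h
  refine tendsto_nhds_unique hlim (tendsto_const_nhds.congr' ?_)
  filter_upwards [hm] with a ha
  exact (hn _ (by rwa [add_sub_add_left_eq_sub])).symm

theorem mem_perSet_of_tendsto_shiftZ (h : Tendsto (fun a => shiftZ (m a) z) F (𝓝 w)) {P : ℕ}
    {c n : ℤ} (hm : ∀ᶠ a in F, (P : ℤ) ∣ m a - c) (hn : n + c ∈ PerSet P z) :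
    n ∈ PerSet P w := fun k hk => by
  have hk' : k + c ∈ PerSet P z := mem_perSet_of_dvd_sub hn (by simpa using hk)
  rw [apply_eq_of_tendsto_shiftZ h hm hk', apply_eq_of_tendsto_shiftZ h hm hn,
    hn _ (by simpa using hk)]

theorem eq_shiftZ_of_tendsto_shiftZ {p : ℕ → ℕ} (hz : ∀ n, ∃ i, n ∈ PerSet (p i) z)
    (h : Tendsto (fun a => shiftZ (m a) z) F (𝓝 w)) {k : ℤ}
    (hk : ∀ i, ∀ᶠ a in F, (p i : ℤ) ∣ m a - k) : w = shiftZ k z :=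
  funext fun n => by
    obtain ⟨i, hi⟩ := hz (n + k)
    exact apply_eq_of_tendsto_shiftZ h (hk i) hi

end Evaluation

end Shift

section Conjugacy

variable {X : Type*} [TopologicalSpace X] {z : ℤ → X} {A B : Set (ℤ → X)}
  {f : (ℤ → X) → (ℤ → X)}

theorem IsConjugacy.injOn (hf : IsConjugacy A B f) : Set.InjOn f A := by
  obtain ⟨-, -, ⟨g, -, -, hgf, -⟩, -⟩ := hf
  exact Set.LeftInvOn.injOn hgf

theorem IsConjugacy.map_shiftZ (hf : IsConjugacy (orbitClosure z) B f) (m : ℤ) {a : ℤ → X}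
    (ha : a ∈ orbitClosure z) : f (shiftZ m a) = shiftZ m (f a) := by
  have hnat : ∀ n : ℕ, ∀ a ∈ orbitClosure z, f (shiftZ n a) = shiftZ n (f a) := by
    intro n
    induction n with
    | zero => simp [shiftZ_zero]
    | succ n ih =>
      intro a ha
      rw [Nat.cast_succ, add_comm, ← shiftZ_shiftZ, hf.2.2.2 _ (shiftZ_mem_orbitClosure _ ha),
        ih a ha, shiftZ_shiftZ]
  obtain ⟨n, rfl | rfl⟩ := Int.eq_nat_or_neg m
  · exact hnat n a ha
  · have h := hnat n _ (shiftZ_mem_orbitClosure (-n) ha)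
    rw [shiftZ_shiftZ, add_neg_cancel, shiftZ_zero] at h
    rw [h, shiftZ_shiftZ, neg_add_cancel, shiftZ_zero]

theorem IsConjugacy.tendsto_shiftZ (hf : IsConjugacy (orbitClosure z) B f) {α : Type*}
    {F : Filter α} [F.NeBot] {m : α → ℤ} {v : ℤ → X}
    (h : Tendsto (fun a => shiftZ (m a) z) F (𝓝 v)) :
    Tendsto (fun a => shiftZ (m a) (f z)) F (𝓝 (f v)) := by
  have hz : ∀ a, shiftZ (m a) z ∈ orbitClosure z :=
    fun a => shiftZ_mem_orbitClosure _ (mem_orbitClosure_self z)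
  have hv : v ∈ orbitClosure z := isClosed_closure.mem_of_tendsto h (Eventually.of_forall hz)
  refine ((hf.2.1 v hv).tendsto.comp (tendsto_nhdsWithin_iff.mpr ⟨h, .of_forall hz⟩)).congr
    fun a => hf.map_shiftZ _ (mem_orbitClosure_self z)

end Conjugacy

theorem exists_tendsto_add_one_of_mem_omegaLimitSet {X : Type*} [TopologicalSpace X]
    {x : ℕ → X} {a : X} (ha : a ∈ omegaLimitSet x) :
    ∃ ψ : ℕ → ℕ, Tendsto ψ atTop atTop ∧ Tendsto (fun j => x (ψ j + 1)) atTop (𝓝 a) := by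
  obtain ⟨φ, hφ, hxφ⟩ := ha
  have hφ' : ∀ j, φ (j + 1) - 1 + 1 = φ (j + 1) := fun j => by
    have := hφ.le_apply (x := j + 1)
    omega
  refine ⟨fun j => φ (j + 1) - 1, tendsto_atTop_mono (fun j => ?_) tendsto_id, ?_⟩
  · have := hφ.le_apply (x := j + 1)
    simp only [id]
    omega
  · simp only [hφ']
    exact hxφ.comp (tendsto_add_atTop_nat 1)

section OmegaLimit

variable {X : Type*} [TopologicalSpace X] [T2Space X] [CompactSpace X] {p : ℕ → ℕ}
  {z : ℤ → X} {B : Set (ℤ → X)} {f : (ℤ → X) → (ℤ → X)}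

theorem IsConjugacy.exists_mem_orbitClosure_apply_zero_eq (hp : FastGrowing p)
    (hf : IsConjugacy (orbitClosure z) B f) {lam : ℕ → ℤ} (hlam : IsCoherent p lam)
    {x : ℕ → X} (hzx : ∀ i, z (lam i) = x (i + 1)) {a : X} (ha : a ∈ omegaLimitSet x) :
    ∃ v ∈ orbitClosure z, v 0 = a ∧
      ∀ n i, n + lam i ∈ PerSet (p i) (f z) → f v n = f z (n + lam i) := by
  obtain ⟨ψ, hψ, hxψ⟩ := exists_tendsto_add_one_of_mem_omegaLimitSet ha
  obtain ⟨v, hv⟩ := exists_tendsto_shiftZ z fun j => lam (ψ j)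
  refine ⟨v, isClosed_closure.mem_of_tendsto hv (.of_forall fun j =>
    shiftZ_mem_orbitClosure _ (mem_orbitClosure_self z)), ?_, fun n i hn => ?_⟩
  · have hv0 : Tendsto (fun j => z (0 + lam (ψ j))) (hyperfilter ℕ) (𝓝 (v 0)) :=
      ((continuous_apply 0).tendsto v).comp hv
    simp only [zero_add, hzx] at hv0
    exact tendsto_nhds_unique hv0 (hxψ.mono_left Nat.hyperfilter_le_atTop)
  · refine apply_eq_of_tendsto_shiftZ (hf.tendsto_shiftZ hv) ?_ hn
    exact ((hψ.eventually_ge_atTop i).filter_mono Nat.hyperfilter_le_atTop).mono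
      fun j hj => hlam.dvd_sub hp hj

theorem FastGrowing.omegaLimitSet_subsingleton (hp : FastGrowing p) {x : ℕ → X}
    {c : ℕ → ℤ} (hc : IsCoherent p c) (hnc : ¬ IsIntegerPoint p c)
    (hf : IsConjugacy (orbitClosure (oxtoby p x)) B f)
    (hw : ∀ n i, n + c i ∈ oxDefined p i → n ∈ PerSet (p i) (f (oxtoby p x))) :
    (omegaLimitSet x).Subsingleton := by
  intro a ha b hb
  obtain ⟨va, hva, rfl, hfa⟩ := hf.exists_mem_orbitClosure_apply_zero_eq hp
    (hp.isCoherent_greedy hc) (hp.oxtoby_greedy hc x) ha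
  obtain ⟨vb, hvb, rfl, hfb⟩ := hf.exists_mem_orbitClosure_apply_zero_eq hp
    (hp.isCoherent_greedy hc) (hp.oxtoby_greedy hc x) hb
  suffices f va = f vb by rw [hf.injOn hva hvb this]
  funext n
  obtain ⟨i, hi⟩ := hp.exists_add_greedy_add_mem_oxDefined hc hnc n
  rw [hfa n i (hw _ i hi), hfb n i (hw _ i hi)]

end OmegaLimit

theorem oxtoby_conjugacy_sends_base_to_shift_general {X : Type*} [MetricSpace X] [CompactSpace X]
    (x x' : ℕ → X) (p : ℕ → ℕ) (hp : FastGrowing p)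
    (hL : (omegaLimitSet x).Nontrivial)
    (f : (ℤ → X) → (ℤ → X))
    (hf : IsConjugacy (orbitClosure (oxtoby p x)) (orbitClosure (oxtoby p x')) f) :
    ∃ m : ℤ, f (oxtoby p x) = shiftZ m (oxtoby p x') := by
  obtain ⟨W, hW⟩ := exists_ultrafilter_tendsto_shiftZ (hf.1 (mem_orbitClosure_self (oxtoby p x)))
  obtain ⟨c, hc, hcW⟩ := hp.exists_isCoherent_eventually_dvd W
  by_cases hint : IsIntegerPoint p c
  · obtain ⟨k, hk⟩ := hint
    refine ⟨k, eq_shiftZ_of_tendsto_shiftZ (hp.exists_mem_perSet_oxtoby x') hW fun i => ?_⟩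
    exact (hcW i).mono fun m hm => by simpa using hm.add (hk i)
  · refine absurd hL (Set.not_nontrivial_iff.mpr (hp.omegaLimitSet_subsingleton hc hint hf ?_))
    exact fun n i hi =>
      mem_perSet_of_tendsto_shiftZ hW (hcW i) (hp.oxDefined_subset_perSet x' i hi)

/-- Theorem `Main1`: if `L((x_i))` and `L((x'_i))` both have at least two
points, then any conjugacy between the corresponding Oxtoby systems maps the Oxtoby
sequence `z` to a shift of the Oxtoby sequence `z'`. -/
theorem oxtoby_conjugacy_sends_base_to_shift {X : Type*} [MetricSpace X] [CompactSpace X]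
    (x x' : ℕ → X) (p : ℕ → ℕ) (hp : FastGrowing p)
    (hL : (omegaLimitSet x).Nontrivial) (hL' : (omegaLimitSet x').Nontrivial)
    (f : (ℤ → X) → (ℤ → X))
    (hf : IsConjugacy (orbitClosure (oxtoby p x)) (orbitClosure (oxtoby p x')) f) :
    ∃ m : ℤ, f (oxtoby p x) = shiftZ m (oxtoby p x') :=
  oxtoby_conjugacy_sends_base_to_shift_general x x' p hp hL f hf
end
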